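/- arXiv:1411.1305 — 2 statements merged into one kernel-verified Lean document; each statement's English description precedes it below -/
import Mathlib

section
/- Let A be a real central hyperplane arrangement and c, c' chambers. If every wall of c separates c from c' (i.e., W(c) ⊆ S(c,c')), then c' = −c. -/
open Matrix
open scoped Classical

/-- Ambient space: `ℝⁿ`. -/
abbrev V (n : ℕ) := Fin n → ℝ

/-- The linear functional `x ↦ v ⬝ᵥ x` determined by a normal vector. -/
def hypl {n : ℕ} (v : V n) : V n →ₗ[ℝ] ℝ where
  toFun x := v ⬝ᵥ x
  map_add' x y := by simp [dotProduct_add]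
  map_smul' c x := by simp [dotProduct_smul]

/-- Two normal vectors define the same hyperplane. -/
def SameHyp {n : ℕ} (u w : V n) : Prop := ∀ x, u ⬝ᵥ x = 0 ↔ w ⬝ᵥ x = 0

/-- A finite set of normal vectors represents a (central) hyperplane arrangement
if each normal is nonzero and distinct normals define distinct hyperplanes. -/
def IsArrangement {n : ℕ} (A : Finset (V n)) : Prop :=
  (∀ v ∈ A, v ≠ 0) ∧ ∀ u ∈ A, ∀ w ∈ A, SameHyp u w → u = w

/-- The point `x` realizes the sign vector `c` on the arrangement `A`. -/
def Realizes {n : ℕ} (A : Finset (V n)) (c : V n → Bool) (x : V n) : Prop :=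
  ∀ v ∈ A, if c v then 0 < v ⬝ᵥ x else v ⬝ᵥ x < 0

/-- A chamber of `A`, encoded by its sign vector. -/
def IsChamber {n : ℕ} (A : Finset (V n)) (c : V n → Bool) : Prop :=
  ∃ x, Realizes A c x

/-- The separation set of two chambers: hyperplanes on which their signs differ. -/
noncomputable def SepSet {n : ℕ} (A : Finset (V n)) (c d : V n → Bool) : Finset (V n) :=
  A.filter (fun v => c v ≠ d v)

/-- The localization of `A` at the subspace `ker u ∩ ker w`:
hyperplanes containing this subspace. -/
noncomputable def loc {n : ℕ} (A : Finset (V n)) (u w : V n) : Finset (V n) :=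
  A.filter (fun v => ∀ x, u ⬝ᵥ x = 0 → w ⬝ᵥ x = 0 → v ⬝ᵥ x = 0)

/-- `u, w` span a codimension-2 intersection subspace `ker u ∩ ker w` of `A`. -/
def Codim2 {n : ℕ} (A : Finset (V n)) (u w : V n) : Prop :=
  u ∈ A ∧ w ∈ A ∧ LinearIndependent ℝ ![u, w]

/-- `I` is biclosed w.r.t. the chamber `c₀`: its intersection with each rank-2
localization is the separation set of some chamber of the localization. -/
def IsBiclosed {n : ℕ} (A : Finset (V n)) (c₀ : V n → Bool) (I : Finset (V n)) : Prop :=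
  ∀ u w, Codim2 A u w →
    ∃ d, IsChamber (loc A u w) d ∧ I ∩ loc A u w = SepSet (loc A u w) c₀ d

/-- `I ⊆ A` is convex with respect to `c₀`. -/
def IsConvex {n : ℕ} (A : Finset (V n)) (c₀ : V n → Bool) (I : Finset (V n)) : Prop :=
  ∀ H ∈ A \ I, ∃ e, IsChamber A e ∧ H ∈ SepSet A c₀ e ∧ SepSet A c₀ e ⊆ A \ I

/-- `I` is 2-closed: its intersection with each rank-2 localization is convex there. -/
def Is2Closed {n : ℕ} (A : Finset (V n)) (c₀ : V n → Bool) (I : Finset (V n)) : Prop :=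
  ∀ u w, Codim2 A u w → IsConvex (loc A u w) c₀ (I ∩ loc A u w)

/-- `v` is a wall of the chamber `c`: some point of the closure of `c` lies on the
hyperplane of `v` and strictly off every other hyperplane of `A`. -/
def IsWall {n : ℕ} (A : Finset (V n)) (c : V n → Bool) (v : V n) : Prop :=
  v ∈ A ∧ ∃ x, v ⬝ᵥ x = 0 ∧ ∀ w ∈ A, ¬ SameHyp v w →
    (if c w then 0 < w ⬝ᵥ x else w ⬝ᵥ x < 0)

/-- The sign vector `v` is feasible: some point satisfies all its strict constraints. -/
def Feasible {n : ℕ} (A : Finset (V n)) (v : V n → SignType) : Prop :=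
  ∃ x : V n, ∀ h ∈ A, (v h = 1 → 0 < h ⬝ᵥ x) ∧ (v h = -1 → h ⬝ᵥ x < 0)

/-- A circuit of `A`: a minimal nonzero infeasible sign vector supported on `A`. -/
def IsCircuit {n : ℕ} (A : Finset (V n)) (v : V n → SignType) : Prop :=
  (∀ h, v h ≠ 0 → h ∈ A) ∧ (∃ h, v h ≠ 0) ∧ ¬ Feasible A v ∧
    ∀ w : V n → SignType, (∀ h, w h ≠ 0 → w h = v h) →
      {h | w h ≠ 0} ⊂ {h | v h ≠ 0} → Feasible A w

/-- A reduced gallery from `c₀` to `-c₀` in `A`, crossing hyperplanes `H 0, H 1, …`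
in order. -/
def IsGallery {n N : ℕ} (A : Finset (V n)) (c₀ : V n → Bool) (H : Fin N → V n)
    (d : Fin (N + 1) → V n → Bool) : Prop :=
  (∀ i, IsChamber A (d i)) ∧ d 0 = c₀ ∧ (∀ v ∈ A, d (Fin.last N) v = !c₀ v) ∧
    ∀ i : Fin N, SepSet A (d i.castSucc) (d i.succ) = {H i}

/-- The enumeration `H` of `A` is admissible: on every rank-2 localization, the
induced order is the crossing order of some reduced gallery of the localization. -/
def Admissible {n N : ℕ} (A : Finset (V n)) (c₀ : V n → Bool) (H : Fin N → V n) : Prop :=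
  ∀ u w, Codim2 A u w →
    ∃ (M : ℕ) (G : Fin M → V n) (e : Fin (M + 1) → V n → Bool) (φ : Fin M → Fin N),
      IsGallery (loc A u w) c₀ G e ∧ StrictMono φ ∧ ∀ k, G k = H (φ k)

/-- The intersection lattice of `A`, as a set of subspaces of `ℝⁿ`. -/
def InterLattice {n : ℕ} (A : Finset (V n)) : Set (Submodule ℝ (V n)) :=
  {X | ∃ S : Finset (V n), S ⊆ A ∧ X = S.inf (fun v => LinearMap.ker (hypl v))}

/-- A modular element of the intersection lattice of `A`. -/
def IsModular {n : ℕ} (A : Finset (V n)) (X : Submodule ℝ (V n)) : Prop :=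
  X ∈ InterLattice A ∧ ∀ Y ∈ InterLattice A, X ⊔ Y ∈ InterLattice A

/-- The rank of the arrangement `A`. -/
noncomputable def rankA {n : ℕ} (A : Finset (V n)) : ℕ :=
  Module.finrank ℝ (Submodule.span ℝ (A : Set (V n)))

/-- A modular flag: a maximal chain `⊤ = X 0 > X 1 > ⋯ > X r` of modular
elements of the intersection lattice, with `X i` of codimension `i`. -/
def IsModularFlag {n : ℕ} (A : Finset (V n)) (X : Fin (rankA A + 1) → Submodule ℝ (V n)) : Prop :=
  X 0 = ⊤ ∧ (∀ i, IsModular A (X i)) ∧ (∀ i j, i ≤ j → X j ≤ X i) ∧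
    ∀ i : Fin (rankA A + 1), Module.finrank ℝ (X i) = n - (i : ℕ)

/-- `A` is supersolvable: its intersection lattice has a modular flag. -/
def IsSupersolvable {n : ℕ} (A : Finset (V n)) : Prop :=
  ∃ X : Fin (rankA A + 1) → Submodule ℝ (V n), IsModularFlag A X

/-- The chamber `c` is incident to the subspace `X`:  some point of `X` lies in the
closure of `c` and strictly off every hyperplane of `A` not containing `X`. -/
def IncidentSub {n : ℕ} (A : Finset (V n)) (c : V n → Bool) (X : Submodule ℝ (V n)) : Prop :=
  ∃ x, x ∈ X ∧ ∀ v ∈ A, ¬ X ≤ LinearMap.ker (hypl v) →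
    (if c v then 0 < v ⬝ᵥ x else v ⬝ᵥ x < 0)

/-- The chamber `c` is incident to the codimension-2 subspace `ker u ∩ ker w`. -/
def IncidentLoc {n : ℕ} (A : Finset (V n)) (c : V n → Bool) (u w : V n) : Prop :=
  ∃ x, (∀ v ∈ loc A u w, v ⬝ᵥ x = 0) ∧ ∀ v ∈ A, v ∉ loc A u w →
    (if c v then 0 < v ⬝ᵥ x else v ⬝ᵥ x < 0)

/-- `(A, c₀)` is bineighborly: any chamber is incident to the intersection of any two
of its walls separating it from `-c₀`. -/
def Bineighborly {n : ℕ} (A : Finset (V n)) (c₀ : V n → Bool) : Prop :=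
  ∀ c, IsChamber A c → ∀ u w, IsWall A c u → IsWall A c w →
    u ∈ SepSet A c (fun v => !c₀ v) → w ∈ SepSet A c (fun v => !c₀ v) → IncidentLoc A c u w

/-- Every chamber of `A` is a simplicial cone: its walls are linearly independent
and span the same subspace as `A`. -/
def IsSimplicial {n : ℕ} (A : Finset (V n)) : Prop :=
  ∀ c, IsChamber A c →
    LinearIndependent ℝ ((↑) : {v // IsWall A c v} → V n) ∧
      Submodule.span ℝ {v | IsWall A c v} = Submodule.span ℝ (A : Set (V n))

/-!
Suppose some hyperplane `v₀` does not separate `c` from `c'`. Pick `y ∈ c'` and walk from a point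
`x ∈ c` along the ray `t ↦ x - t y`. A hyperplane `v` is crossed by the ray iff `c v = c' v`, and
then at time `(v ⬝ᵥ x) / (v ⬝ᵥ y)`. Since `c` is open and the hyperplanes normal to
`(w ⬝ᵥ y) • v - (v ⬝ᵥ y) • w` are nowhere dense, `x` can be chosen so that no two distinct hyperplanes
are crossed at the same time. The first hyperplane crossed is then a wall of `c`, and it does not
separate `c` from `c'`.
-/

section

variable {n : ℕ}

lemma dense_setOf_dotProduct_ne_zero {u : V n} (hu : u ≠ 0) : Dense {x : V n | u ⬝ᵥ x ≠ 0} := by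
  have hker : LinearMap.ker (hypl u) ≠ ⊤ := fun h =>
    hu (dotProduct_self_eq_zero.mp (LinearMap.mem_ker.mp (h ▸ Submodule.mem_top : u ∈ _)))
  change Dense (LinearMap.ker (hypl u) : Set (V n))ᶜ
  rw [← interior_eq_empty_iff_dense_compl, ← Set.not_nonempty_iff_eq_empty]
  exact fun h => hker ((LinearMap.ker (hypl u)).eq_top_of_nonempty_interior' h)

lemma exists_mem_forall_dotProduct_ne_zero {ι : Type*} (F : Finset ι) {u : ι → V n}
    (hu : ∀ i ∈ F, u i ≠ 0) {U : Set (V n)} (hU : IsOpen U) (hne : U.Nonempty) :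
    ∃ x ∈ U, ∀ i ∈ F, u i ⬝ᵥ x ≠ 0 := by
  have hdense : Dense (⋂ i ∈ (F : Set ι), {x : V n | u i ⬝ᵥ x ≠ 0}) :=
    dense_biInter_of_isOpen
      (fun i _ => isOpen_ne_fun (continuous_const.dotProduct continuous_id) continuous_const)
      F.countable_toSet fun i hi => dense_setOf_dotProduct_ne_zero (hu i hi)
  obtain ⟨x, hxU, hx⟩ := hdense.inter_open_nonempty U hU hne
  exact ⟨x, hxU, by simpa using hx⟩

lemma isOpen_setOf_realizes (A : Finset (V n)) (c : V n → Bool) :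
    IsOpen {x | Realizes A c x} := by
  have hset : {x | Realizes A c x} =
      ⋂ v ∈ A, {x | if c v then 0 < v ⬝ᵥ x else v ⬝ᵥ x < 0} := by
    ext; simp [Realizes]
  rw [hset]
  refine isOpen_biInter_finset fun v _ => ?_
  have hv : Continuous fun x : V n => v ⬝ᵥ x := continuous_const.dotProduct continuous_id
  cases c v
  · exact isOpen_lt hv continuous_const
  · exact isOpen_lt continuous_const hv

lemma SameHyp.of_smul_eq_smul {v w : V n} {a b : ℝ} (ha : a ≠ 0) (hb : b ≠ 0)
    (h : a • v = b • w) : SameHyp v w := by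
  intro x
  have hx : a * (v ⬝ᵥ x) = b * (w ⬝ᵥ x) := by
    simpa only [smul_dotProduct, smul_eq_mul] using congrArg (· ⬝ᵥ x) h
  constructor <;> intro h0 <;> simp_all

lemma ne_zero_of_ite_sign {b : Bool} {r : ℝ} (hr : if b then 0 < r else r < 0) : r ≠ 0 := by
  cases b
  · exact (show r < 0 from hr).ne
  · exact (show 0 < r from hr).ne'

lemma ite_sign_of_mul_pos {b : Bool} {r s : ℝ} (hr : if b then 0 < r else r < 0)
    (hrs : 0 < r * s) : if b then 0 < s else s < 0 := by
  cases b
  · exact (neg_iff_neg_of_mul_pos hrs).mp hr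
  · exact (pos_iff_pos_of_mul_pos hrs).mp hr

lemma mul_pos_iff_eq_of_ite_sign {b b' : Bool} {r s : ℝ} (hr : if b then 0 < r else r < 0)
    (hs : if b' then 0 < s else s < 0) : 0 < r * s ↔ b = b' := by
  cases b <;> cases b' <;> simp only [Bool.false_eq_true, if_true, if_false] at hr hs <;>
    simp only [reduceCtorEq, iff_true, iff_false, not_lt] <;> nlinarith

lemma mul_sub_mul_pos {a b s : ℝ} (ha : a ≠ 0) (hs : 0 ≤ s) (hlt : 0 < a * b → s < a / b) :
    0 < a * (a - s * b) := by
  have hsq : 0 < a * a := mul_self_pos.mpr ha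
  by_cases hab : 0 < a * b
  · have hb : b ≠ 0 := by rintro rfl; simp at hab
    have hsq' : a / b * (a * b) = a * a := by field_simp
    nlinarith [mul_lt_mul_of_pos_right (hlt hab) hab]
  · nlinarith

lemma exists_realizes_generic {A : Finset (V n)} {c : V n → Bool} (hc : IsChamber A c)
    {y : V n} (hy : ∀ v ∈ A, v ⬝ᵥ y ≠ 0) :
    ∃ x, Realizes A c x ∧
      ∀ v ∈ A, ∀ w ∈ A, ¬ SameHyp v w → (v ⬝ᵥ x) * (w ⬝ᵥ y) ≠ (w ⬝ᵥ x) * (v ⬝ᵥ y) := by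
  set F := (A ×ˢ A).filter fun q => ¬ SameHyp q.1 q.2
  have hF : ∀ q ∈ F, (q.2 ⬝ᵥ y) • q.1 - (q.1 ⬝ᵥ y) • q.2 ≠ 0 := by
    rintro ⟨v, w⟩ hq h0
    simp only [F, Finset.mem_filter, Finset.mem_product] at hq
    exact hq.2 (.of_smul_eq_smul (hy w hq.1.2) (hy v hq.1.1) (sub_eq_zero.mp h0))
  obtain ⟨x, hx, hxF⟩ := exists_mem_forall_dotProduct_ne_zero F hF (isOpen_setOf_realizes A c) hc
  refine ⟨x, hx, fun v hv w hw hvw heq => hxF (v, w) ?_ ?_⟩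
  · simp only [F, Finset.mem_filter, Finset.mem_product]
    exact ⟨⟨hv, hw⟩, hvw⟩
  · simp only [sub_dotProduct, smul_dotProduct, smul_eq_mul]
    linear_combination heq

lemma exists_nonseparating_isWall {A : Finset (V n)} {c c' : V n → Bool} {x y : V n}
    (hx : Realizes A c x) (hy : Realizes A c' y)
    (hgen : ∀ v ∈ A, ∀ w ∈ A, ¬ SameHyp v w → (v ⬝ᵥ x) * (w ⬝ᵥ y) ≠ (w ⬝ᵥ x) * (v ⬝ᵥ y))
    {v₀ : V n} (hv₀ : v₀ ∈ A) (hcv₀ : c v₀ = c' v₀) :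
    ∃ v, IsWall A c v ∧ c v = c' v := by
  have hprod : ∀ v ∈ A, 0 < (v ⬝ᵥ x) * (v ⬝ᵥ y) ↔ c v = c' v := fun v hv =>
    mul_pos_iff_eq_of_ite_sign (hx v hv) (hy v hv)
  set T := A.filter fun v => c v = c' v
  set s : V n → ℝ := fun v => (v ⬝ᵥ x) / (v ⬝ᵥ y)
  obtain ⟨v, hvT, hvmin⟩ := T.exists_min_image s ⟨v₀, Finset.mem_filter.mpr ⟨hv₀, hcv₀⟩⟩
  obtain ⟨hvA, hcv⟩ := Finset.mem_filter.mp hvT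
  have hvy : v ⬝ᵥ y ≠ 0 := ne_zero_of_ite_sign (hy v hvA)
  have hs : 0 ≤ s v := (div_pos_iff.mpr (mul_pos_iff.mp ((hprod v hvA).mpr hcv))).le
  refine ⟨v, ⟨hvA, x - s v • y, ?_, fun w hw hvw => ?_⟩, hcv⟩
  · simp only [s, dotProduct_sub, dotProduct_smul, smul_eq_mul, div_mul_cancel₀ _ hvy, sub_self]
  refine ite_sign_of_mul_pos (hx w hw) ?_
  rw [dotProduct_sub, dotProduct_smul, smul_eq_mul]
  refine mul_sub_mul_pos (ne_zero_of_ite_sign (hx w hw)) hs fun hwpos => ?_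
  have hwT : w ∈ T := Finset.mem_filter.mpr ⟨hw, (hprod w hw).mp hwpos⟩
  refine (hvmin w hwT).lt_of_ne fun heq => hgen v hvA w hw hvw ?_
  rw [div_eq_div_iff hvy (ne_zero_of_ite_sign (hy w hw))] at heq
  linear_combination heq

end

theorem walls_in_sep_implies_opposite_general {n : ℕ} (A : Finset (V n))
    (c c' : V n → Bool) (hc : IsChamber A c) (hc' : IsChamber A c')
    (hw : ∀ v, IsWall A c v → v ∈ SepSet A c c') :
    ∀ v ∈ A, c' v = !c v := by
  obtain ⟨y, hy⟩ := hc'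
  obtain ⟨x, hx, hgen⟩ := exists_realizes_generic hc fun v hv => ne_zero_of_ite_sign (hy v hv)
  intro v₀ hv₀
  by_contra hne
  obtain ⟨v, hwall, hv⟩ := exists_nonseparating_isWall hx hy hgen hv₀
    (by simpa [eq_comm] using hne)
  exact (Finset.mem_filter.mp (hw v hwall)).2 hv

theorem walls_in_sep_implies_opposite {n : ℕ} (A : Finset (V n)) (hA : IsArrangement A)
    (c c' : V n → Bool) (hc : IsChamber A c) (hc' : IsChamber A c')
    (hw : ∀ v, IsWall A c v → v ∈ SepSet A c c') :
    ∀ v ∈ A, c' v = !c v :=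
  walls_in_sep_implies_opposite_general A c c' hc hc' hw
end

section
/- Let A be a real central hyperplane arrangement with fundamental chamber c₀, and let c ≤ d in the chamber poset (i.e., S(c₀,c) ⊆ S(c₀,d)). Then S(c,d) is convex: for every hyperplane H ∈ A − S(c,d) there exists a chamber e with H ∈ S(c₀,e) and S(c₀,e) ⊆ A − S(c,d). -/
open Matrix
open scoped Classical

/-!
The hypothesis splits `A` as `S(c₀,c) ⊔ S(c,d) ⊔ S(d,-c₀)`. For `H ∉ S(c,d)`, the chamber `c`
works if `H ∈ S(c₀,c)`; otherwise `H ∈ S(d,-c₀)`, and the opposite chamber `-d` works, because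
`S(c₀,-d) = S(d,-c₀)` is the complement of `S(c₀,d) ⊇ S(c,d)`.
-/

section SepSet

variable {n : ℕ} {A : Finset (V n)}

theorem mem_sepSet {c d : V n → Bool} {v : V n} : v ∈ SepSet A c d ↔ v ∈ A ∧ c v ≠ d v :=
  Finset.mem_filter

theorem sepSet_comm (c d : V n → Bool) : SepSet A c d = SepSet A d c := by
  ext v
  simp only [mem_sepSet, ne_comm]

theorem sepSet_subset_union (a b c : V n → Bool) :
    SepSet A a c ⊆ SepSet A a b ∪ SepSet A b c := by
  intro v hv
  rw [mem_sepSet] at hv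
  rw [Finset.mem_union, mem_sepSet, mem_sepSet]
  by_contra! h
  exact hv.2 ((h.1 hv.1).trans (h.2 hv.1))

theorem sepSet_not_right (c d : V n → Bool) :
    SepSet A c (fun v => !d v) = A \ SepSet A c d := by
  ext v
  simp only [mem_sepSet, Finset.mem_sdiff]
  cases c v <;> cases d v <;> simp

theorem IsChamber.not {c : V n → Bool} (hc : IsChamber A c) : IsChamber A (fun v => !c v) := by
  obtain ⟨x, hx⟩ := hc
  refine ⟨-x, fun v hv => ?_⟩
  have hxv := hx v hv
  cases hcv : c v <;> simp only [hcv, Bool.not_false, Bool.not_true, dotProduct_neg] at hxv ⊢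
  · simpa using hxv
  · simpa using hxv

variable {c₀ c d : V n → Bool}

theorem sepSet_subset_of_sepSet_subset (hcd : SepSet A c₀ c ⊆ SepSet A c₀ d) :
    SepSet A c d ⊆ SepSet A c₀ d := by
  have h := sepSet_subset_union (A := A) c c₀ d
  rwa [sepSet_comm c c₀, Finset.union_eq_right.mpr hcd] at h

theorem disjoint_sepSet_of_sepSet_subset (hcd : SepSet A c₀ c ⊆ SepSet A c₀ d) :
    Disjoint (SepSet A c₀ c) (SepSet A c d) := by
  refine Finset.disjoint_left.mpr fun v hv₀ hv => ?_
  have hv₀d := mem_sepSet.mp (hcd hv₀)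
  rw [mem_sepSet] at hv₀ hv
  cases h₀ : c₀ v <;> cases hc : c v <;> cases hd : d v <;> simp_all

end SepSet

theorem interval_sep_convex_general {n : ℕ} (A : Finset (V n))
    (c₀ c d : V n → Bool) (hc : IsChamber A c)
    (hd : IsChamber A d) (hcd : SepSet A c₀ c ⊆ SepSet A c₀ d) :
    IsConvex A c₀ (SepSet A c d) := by
  intro H hH
  obtain ⟨hHA, hHcd⟩ := Finset.mem_sdiff.mp hH
  by_cases hHc : H ∈ SepSet A c₀ c
  · refine ⟨c, hc, hHc, fun v hv => Finset.mem_sdiff.mpr ⟨(mem_sepSet.mp hv).1, ?_⟩⟩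
    exact Finset.disjoint_left.mp (disjoint_sepSet_of_sepSet_subset hcd) hv
  · have hHd : H ∉ SepSet A c₀ d := fun h =>
      (Finset.mem_union.mp (sepSet_subset_union c₀ c d h)).elim hHc hHcd
    refine ⟨fun v => !d v, hd.not, ?_, ?_⟩
    · rw [sepSet_not_right]
      exact Finset.mem_sdiff.mpr ⟨hHA, hHd⟩
    · rw [sepSet_not_right]
      exact Finset.sdiff_subset_sdiff subset_rfl (sepSet_subset_of_sepSet_subset hcd)

theorem interval_sep_convex {n : ℕ} (A : Finset (V n)) (hA : IsArrangement A)
    (c₀ c d : V n → Bool) (hc₀ : IsChamber A c₀) (hc : IsChamber A c)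
    (hd : IsChamber A d) (hcd : SepSet A c₀ c ⊆ SepSet A c₀ d) :
    IsConvex A c₀ (SepSet A c d) :=
  interval_sep_convex_general A c₀ c d hc hd hcd
end
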